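/- Fix λ > 0 and x ∈ ℝ. Define, for a probability measure ρ on ℝ, the probability measure Σ_x(ρ) = Σ_{n=0}^∞ (e^{−λ} λ^n / n!) · (h_{n+1})_*(δ_x ∗ ρ^{∗n}), where ρ^{∗n} is the n-fold convolution power of ρ (with ρ^{∗0} = δ_0), ∗ denotes convolution of measures, h_k : ℝ → ℝ is y ↦ y/k, and (h_k)_* is the pushforward. Then the map ρ ↦ Σ_x(ρ) is sequentially continuous on probability measures on ℝ: if ρ_n → ρ in the sense that ∫ φ dρ_n → ∫ φ dρ for every continuous compactly supported φ : ℝ → ℝ, then ∫ φ dΣ_x(ρ_n) → ∫ φ dΣ_x(ρ) for every continuous compactly supported φ. -/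

import Mathlib

open MeasureTheory Filter

/-- The `n`-fold convolution power of a measure on `ℝ`, with `ρ^{∗0} = δ₀`. -/
noncomputable def convPow (ρ : Measure ℝ) : ℕ → Measure ℝ
  | 0 => Measure.dirac 0
  | n + 1 => (convPow ρ n).conv ρ

/-- `Σ_x(ρ) = Σ_{n=0}^∞ (e^{−λ} λ^n / n!) · (h_{n+1})_*(δ_x ∗ ρ^{∗n})`,
where `h_k(y) = y/k`. -/
noncomputable def SigmaX (l x : ℝ) (ρ : Measure ℝ) : Measure ℝ :=
  Measure.sum (fun n : ℕ =>
    ENNReal.ofReal (Real.exp (-l) * l ^ n / n.factorial) •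
      ((Measure.dirac x).conv (convPow ρ n)).map (fun y => y / ((n : ℝ) + 1)))

/-- Vague convergence: convergence of the integrals against every continuous
compactly supported test function. -/
def VagueTendsto (ρs : ℕ → Measure ℝ) (ρ : Measure ℝ) : Prop :=
  ∀ φ : ℝ → ℝ, Continuous φ → HasCompactSupport φ →
    Tendsto (fun n => ∫ x, φ x ∂(ρs n)) atTop (nhds (∫ x, φ x ∂ρ))

/-!
Vague convergence of probability measures on `ℝ` to a probability measure is already weak
convergence: a bump function `χ` with `∫ χ dρ` close to `1` also has `∫ χ dρₙ` close to `1` for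
large `n`, so no mass escapes to infinity. Convolution and pushforward by continuous maps are
weakly continuous, hence each term `(h_{k+1})_*(δ_x ∗ ρ^{∗k})` depends continuously on `ρ`, and
the series converges by dominated convergence since the Poisson weights are summable.
-/
open Set Topology ENNReal BoundedContinuousFunction

lemma tendsto_of_forall_approx {ι α : Type*} [PseudoMetricSpace α] {L : Filter ι}
    {a : ι → α} {a₀ : α}
    (h : ∀ ε > 0, ∃ (b : ι → α) (b₀ : α),
      Tendsto b L (𝓝 b₀) ∧ (∀ᶠ i in L, dist (a i) (b i) ≤ ε) ∧ dist a₀ b₀ ≤ ε) :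
    Tendsto a L (𝓝 a₀) := by
  refine Metric.tendsto_nhds.2 fun ε hε => ?_
  obtain ⟨b, b₀, hb, hab, hab₀⟩ := h (ε / 4) (by positivity)
  filter_upwards [hab, Metric.tendsto_nhds.1 hb (ε / 4) (by positivity)] with i h₁ h₂
  calc dist (a i) a₀ ≤ dist (a i) (b i) + dist (b i) b₀ + dist b₀ a₀ := dist_triangle4 _ _ _ _
    _ < ε := by rw [dist_comm b₀]; linarith

lemma abs_integral_sub_integral_mul_le {Ω : Type*} [MeasurableSpace Ω] [TopologicalSpace Ω]
    [OpensMeasurableSpace Ω] (ν : Measure Ω) [IsProbabilityMeasure ν] (f : Ω →ᵇ ℝ) {g : Ω → ℝ}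
    (hg : Continuous g) (hg₀ : ∀ t, 0 ≤ g t) (hg₁ : ∀ t, g t ≤ 1) :
    |∫ t, f t ∂ν - ∫ t, f t * g t ∂ν| ≤ ‖f‖ * (1 - ∫ t, g t ∂ν) := by
  have hg_int : Integrable g ν := Integrable.of_bound hg.aestronglyMeasurable 1
    (ae_of_all _ fun t => by rw [Real.norm_of_nonneg (hg₀ t)]; exact hg₁ t)
  have hfg_int : Integrable (fun t => f t * g t) ν :=
    hg_int.bdd_mul (f.integrable ν).1 (ae_of_all _ f.norm_coe_le_norm)
  rw [← integral_sub (f.integrable ν) hfg_int]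
  calc ‖∫ t, (f t - f t * g t) ∂ν‖ ≤ ∫ t, ‖f‖ * (1 - g t) ∂ν := by
        refine norm_integral_le_of_norm_le (((integrable_const 1).sub hg_int).const_mul _)
          (ae_of_all _ fun t => ?_)
        rw [← mul_one_sub, norm_mul, Real.norm_of_nonneg (sub_nonneg.2 (hg₁ t))]
        exact mul_le_mul_of_nonneg_right (f.norm_coe_le_norm t) (sub_nonneg.2 (hg₁ t))
    _ = ‖f‖ * (1 - ∫ t, g t ∂ν) := by
        rw [integral_const_mul, integral_sub (integrable_const 1) hg_int]
        simp

noncomputable def bumpAtZero (n : ℕ) : ContDiffBump (0 : ℝ) :=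
  ⟨n + 1, n + 2, by positivity, by linarith⟩

lemma tendsto_integral_bumpAtZero (μ : Measure ℝ) [IsProbabilityMeasure μ] :
    Tendsto (fun n => ∫ t, bumpAtZero n t ∂μ) atTop (𝓝 1) := by
  have h := tendsto_integral_of_dominated_convergence (μ := μ) (F := fun n t => bumpAtZero n t)
    (f := fun _ => 1) (fun _ => (1 : ℝ))
    (fun n => (bumpAtZero n).continuous.aestronglyMeasurable) (integrable_const 1)
    (fun n => ae_of_all _ fun t => by
      rw [Real.norm_of_nonneg (bumpAtZero n).nonneg]; exact (bumpAtZero n).le_one)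
    (ae_of_all _ fun t => tendsto_const_nhds.congr' ?_)
  · simpa using h
  obtain ⟨N, hN⟩ := exists_nat_ge |t|
  filter_upwards [eventually_ge_atTop N] with n hn
  refine ((bumpAtZero n).one_of_mem_closedBall ?_).symm
  rw [Metric.mem_closedBall, dist_zero_right, Real.norm_eq_abs]
  exact hN.trans (by simp only [bumpAtZero]; linarith [(Nat.cast_le (α := ℝ)).2 hn])

theorem MeasureTheory.ProbabilityMeasure.tendsto_of_vagueTendsto {μs : ℕ → ProbabilityMeasure ℝ}
    {μ : ProbabilityMeasure ℝ} (h : VagueTendsto (fun n => μs n) μ) : Tendsto μs atTop (𝓝 μ) := by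
  refine tendsto_iff_forall_integral_tendsto.2 fun f =>
    tendsto_of_forall_approx fun ε hε => ?_
  obtain ⟨η, hη, hfη⟩ : ∃ η > 0, ‖f‖ * (2 * η) ≤ ε := by
    refine ⟨ε / (2 * (‖f‖ + 1)), by positivity, ?_⟩
    calc ‖f‖ * (2 * (ε / (2 * (‖f‖ + 1)))) ≤ (‖f‖ + 1) * (2 * (ε / (2 * (‖f‖ + 1)))) := by
          gcongr; linarith
      _ = ε := by field_simp
  obtain ⟨k, hk⟩ := ((tendsto_integral_bumpAtZero (μ : Measure ℝ)).eventually
    (eventually_gt_nhds (sub_lt_self 1 hη))).exists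
  set χ := bumpAtZero k
  have hχ := h χ χ.continuous χ.hasCompactSupport
  have hcut := fun ν : ProbabilityMeasure ℝ =>
    abs_integral_sub_integral_mul_le (ν : Measure ℝ) f χ.continuous (fun _ => χ.nonneg)
      (fun _ => χ.le_one)
  refine ⟨fun n => ∫ t, f t * χ t ∂(μs n : Measure ℝ), ∫ t, f t * χ t ∂(μ : Measure ℝ),
    h _ (f.continuous.mul χ.continuous) χ.hasCompactSupport.mul_left, ?_, ?_⟩
  · filter_upwards [hχ.eventually (eventually_gt_nhds (show 1 - 2 * η < _ by linarith))]
      with n hn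
    rw [Real.dist_eq]
    refine (hcut (μs n)).trans (le_trans ?_ hfη)
    gcongr
    linarith
  · rw [Real.dist_eq]
    refine (hcut μ).trans (le_trans ?_ hfη)
    gcongr
    linarith

instance isProbabilityMeasure_convPow (ρ : Measure ℝ) [IsProbabilityMeasure ρ] (n : ℕ) :
    IsProbabilityMeasure (convPow ρ n) := by
  induction n with
  | zero => rw [convPow]; infer_instance
  | succ n _ => rw [convPow]; infer_instance

namespace MeasureTheory.ProbabilityMeasure

variable {M : Type*} [AddMonoid M] [MeasurableSpace M]

noncomputable def conv [MeasurableAdd₂ M] (μ ν : ProbabilityMeasure M) : ProbabilityMeasure M :=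
  ⟨(μ : Measure M).conv ν, inferInstance⟩

@[fun_prop]
lemma continuous_conv [TopologicalSpace M] [ContinuousAdd M] [SecondCountableTopology M]
    [TopologicalSpace.PseudoMetrizableSpace M] [BorelSpace M] :
    Continuous fun p : ProbabilityMeasure M × ProbabilityMeasure M => p.1.conv p.2 := by
  have h : (fun p : ProbabilityMeasure M × ProbabilityMeasure M => p.1.conv p.2) =
      fun p => (p.1.prod p.2).map continuous_add.measurable.aemeasurable := rfl
  rw [h]
  exact (continuous_map continuous_add).comp continuous_prod

noncomputable def convPow (ρ : ProbabilityMeasure ℝ) (n : ℕ) : ProbabilityMeasure ℝ :=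
  ⟨_root_.convPow ρ n, inferInstance⟩

@[fun_prop]
lemma continuous_convPow (n : ℕ) : Continuous fun ρ : ProbabilityMeasure ℝ => ρ.convPow n := by
  induction n with
  | zero => exact continuous_const (y := diracProba 0)
  | succ n ih =>
    have h : (fun ρ : ProbabilityMeasure ℝ => ρ.convPow (n + 1)) =
        fun ρ => (ρ.convPow n).conv ρ := rfl
    rw [h]
    exact continuous_conv.comp (ih.prodMk continuous_id)

end MeasureTheory.ProbabilityMeasure

section WeightedSum

variable {Ω : Type*} [MeasurableSpace Ω] [TopologicalSpace Ω] [OpensMeasurableSpace Ω]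
  {w : ℕ → ℝ≥0∞}

lemma integral_sum_smul_eq_tsum (hw : ∑' k, w k ≠ ∞) (μ : ℕ → ProbabilityMeasure Ω)
    (f : Ω →ᵇ ℝ) :
    ∫ ω, f ω ∂(Measure.sum fun k => w k • (μ k : Measure Ω)) =
      ∑' k, (w k).toReal * ∫ ω, f ω ∂(μ k : Measure Ω) := by
  have : IsFiniteMeasure (Measure.sum fun k => w k • (μ k : Measure Ω)) :=
    ⟨by simpa [Measure.sum_apply _ MeasurableSet.univ] using hw.lt_top⟩
  rw [integral_sum_measure (f.integrable _)]
  simp [integral_smul_measure]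

lemma tendsto_integral_sum_smul {ι : Type*} {L : Filter ι} (hw : ∑' k, w k ≠ ∞)
    {μs : ι → ℕ → ProbabilityMeasure Ω} {μ : ℕ → ProbabilityMeasure Ω}
    (h : ∀ k, Tendsto (fun i => μs i k) L (𝓝 (μ k))) (f : Ω →ᵇ ℝ) :
    Tendsto (fun i => ∫ ω, f ω ∂(Measure.sum fun k => w k • (μs i k : Measure Ω))) L
      (𝓝 (∫ ω, f ω ∂(Measure.sum fun k => w k • (μ k : Measure Ω)))) := by
  simp only [integral_sum_smul_eq_tsum hw]
  refine tendsto_tsum_of_dominated_convergence ((ENNReal.summable_toReal hw).mul_right ‖f‖)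
    (fun k => ((ProbabilityMeasure.tendsto_iff_forall_integral_tendsto.1 (h k)) f).const_mul _)
    (.of_forall fun i k => ?_)
  rw [norm_mul, Real.norm_of_nonneg ENNReal.toReal_nonneg]
  gcongr
  exact f.norm_integral_le_norm _

end WeightedSum

/-- `(h_{k+1})_*(δ_x ∗ ρ^{∗k})`, written with `δ_x ∗ ν = (x + ·)_* ν`. -/
noncomputable def sigmaXTerm (x : ℝ) (k : ℕ) (ρ : ProbabilityMeasure ℝ) :
    ProbabilityMeasure ℝ :=
  (ρ.convPow k).map (f := fun y => (x + y) / (k + 1)) (by fun_prop)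

lemma continuous_sigmaXTerm (x : ℝ) (k : ℕ) : Continuous (sigmaXTerm x k) :=
  (ProbabilityMeasure.continuous_map (by fun_prop)).comp (ProbabilityMeasure.continuous_convPow k)

lemma SigmaX_eq_sum_sigmaXTerm (l x : ℝ) (ρ : ProbabilityMeasure ℝ) :
    SigmaX l x ρ = Measure.sum fun k =>
      ENNReal.ofReal (Real.exp (-l) * l ^ k / k.factorial) • (sigmaXTerm x k ρ : Measure ℝ) := by
  refine congrArg Measure.sum (funext fun k => ?_)
  rw [sigmaXTerm, ProbabilityMeasure.toMeasure_map, ProbabilityMeasure.convPow, Measure.dirac_conv,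
    Measure.map_map (by fun_prop) (by fun_prop)]
  rfl

lemma tsum_ofReal_poisson_ne_top (l : ℝ) :
    ∑' k : ℕ, ENNReal.ofReal (Real.exp (-l) * l ^ k / k.factorial) ≠ ∞ :=
  ENNReal.tsum_coe_ne_top_iff_summable.2 <| Summable.toNNReal <| by
    simpa only [mul_div_assoc] using (Real.summable_pow_div_factorial l).mul_left (Real.exp (-l))

theorem SigmaX_sequentially_continuous_general
    (l : ℝ) (x : ℝ)
    (ρ : Measure ℝ) (ρs : ℕ → Measure ℝ)
    (hρ : IsProbabilityMeasure ρ) (hρs : ∀ n, IsProbabilityMeasure (ρs n))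
    (hconv : VagueTendsto ρs ρ) :
    VagueTendsto (fun n => SigmaX l x (ρs n)) (SigmaX l x ρ) := by
  let P : ProbabilityMeasure ℝ := ⟨ρ, hρ⟩
  let Ps : ℕ → ProbabilityMeasure ℝ := fun n => ⟨ρs n, hρs n⟩
  have hP : Tendsto Ps atTop (𝓝 P) := ProbabilityMeasure.tendsto_of_vagueTendsto hconv
  intro φ hφ hφ_supp
  have h := tendsto_integral_sum_smul (tsum_ofReal_poisson_ne_top l)
    (fun k => ((continuous_sigmaXTerm x k).tendsto P).comp hP) (ofCompactSupport φ hφ hφ_supp)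
  simp only [Function.comp_apply, ← SigmaX_eq_sum_sigmaXTerm] at h
  exact h

theorem SigmaX_sequentially_continuous
    (l : ℝ) (hl : 0 < l) (x : ℝ)
    (ρ : Measure ℝ) (ρs : ℕ → Measure ℝ)
    (hρ : IsProbabilityMeasure ρ) (hρs : ∀ n, IsProbabilityMeasure (ρs n))
    (hconv : VagueTendsto ρs ρ) :
    VagueTendsto (fun n => SigmaX l x (ρs n)) (SigmaX l x ρ) :=
  SigmaX_sequentially_continuous_general l x ρ ρs hρ hρs hconv
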